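/- Let G be the 5-dimensional real Lie algebra with basis (X₁,…,X₅) and nonzero brackets [X₁,X₃] = X₃, [X₁,X₄] = X₄, [X₁,X₅] = 2X₅, [X₂,X₃] = X₄, [X₂,X₄] = −X₃, [X₃,X₄] = X₅. Then for every linear functional F on G, the skew-symmetric bilinear form B_F(X,Y) = F([X,Y]) has rank 0 or 4. In particular G is an MD5-algebra. -/

import Mathlib

/-!
In the basis `b` the Gram matrix of `B_F` depends only on `F (b 2)`, `F (b 3)`, `F (b 4)`, the
values of `F` on the derived algebra. If they all vanish, `B_F = 0`. Otherwise the vector of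
4 × 4 Pfaffians of this skew-symmetric 5 × 5 matrix is nonzero and spans its kernel, so the radical
of `B_F` is a line and the rank is `5 - 1 = 4`.
-/

/-- The skew-symmetric bilinear form `B_F(X, Y) = F ⁅X, Y⁆` associated to a
linear functional `F` on a Lie algebra. -/
noncomputable def BF {L : Type} [LieRing L] [LieAlgebra ℝ L]
    (F : Module.Dual ℝ L) : LinearMap.BilinForm ℝ L :=
  LinearMap.mk₂ ℝ (fun X Y => F ⁅X, Y⁆)
    (fun X X' Y => by simp [add_lie])
    (fun c X Y => by simp [smul_lie])
    (fun X Y Y' => by simp [lie_add])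
    (fun c X Y => by simp [lie_smul])

/-- The rank of a bilinear form: `dim V` minus the dimension of its radical. -/
noncomputable def rankB {V : Type} [AddCommGroup V] [Module ℝ V]
    (B : LinearMap.BilinForm ℝ V) : ℕ :=
  Module.finrank ℝ V - Module.finrank ℝ (LinearMap.ker B)

open Matrix Module
open LinearMap (BilinForm ker)
open LinearMap.BilinForm (toMatrix toMatrix_apply)

section rankB

variable {V : Type} [AddCommGroup V] [Module ℝ V]

theorem rankB_zero : rankB (0 : BilinForm ℝ V) = 0 := by
  rw [rankB, LinearMap.ker_zero, finrank_top, Nat.sub_self]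

theorem rankB_of_ker_eq_span_singleton {B : BilinForm ℝ V} {v : V}
    (hv : v ≠ 0) (h : ker B = ℝ ∙ v) : rankB B = finrank ℝ V - 1 := by
  rw [rankB, h, finrank_span_singleton hv]

end rankB

theorem LinearMap.BilinForm.mem_ker_iff_vecMul_toMatrix_eq_zero {R M ι : Type*} [CommRing R]
    [AddCommGroup M] [Module R M] [Fintype ι] [DecidableEq ι] (b : Basis ι R M)
    (B : BilinForm R M) (x : M) :
    x ∈ ker B ↔ b.repr x ᵥ* toMatrix b B = 0 := by
  have key : ∀ j, B x (b j) = (b.repr x ᵥ* toMatrix b B) j := fun j => by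
    rw [BilinForm.apply_eq_dotProduct_toMatrix_mulVec b, Basis.repr_self,
      Finsupp.single_eq_pi_single, mulVec_single_one]
    rfl
  rw [LinearMap.mem_ker]
  constructor
  · intro h
    funext j
    rw [← key, h]
    rfl
  · intro h
    exact b.ext fun j => by rw [key, h]; rfl

theorem exists_eq_smul_of_mul_eq_mul {K ι : Type*} [Field K] {a w : ι → K} {k : ι}
    (hk : w k ≠ 0) (h : ∀ i, a i * w k = a k * w i) : ∃ t : K, a = t • w :=
  ⟨a k / w k, funext fun i => by rw [Pi.smul_apply, smul_eq_mul, div_mul_eq_mul_div,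
    eq_div_iff hk, h]⟩

section Gram

variable (c₂ c₃ c₄ : ℝ)

def md5Gram : Matrix (Fin 5) (Fin 5) ℝ :=
  !![0, 0, c₂, c₃, 2 * c₄;
     0, 0, c₃, -c₂, 0;
     -c₂, -c₃, 0, c₄, 0;
     -c₃, c₂, -c₄, 0, 0;
     -(2 * c₄), 0, 0, 0, 0]

/-- Up to the sign `(-1) ^ (k + 1)`, entry `k` is the Pfaffian of `md5Gram c₂ c₃ c₄` with row and
column `k` removed. -/
def md5KerVec : Fin 5 → ℝ :=
  ![0, 2 * c₄ ^ 2, 2 * c₂ * c₄, 2 * c₃ * c₄, -(c₂ ^ 2 + c₃ ^ 2)]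

theorem md5Gram_zero : md5Gram 0 0 0 = 0 := by
  ext i j
  fin_cases i <;> fin_cases j <;> simp [md5Gram]

theorem md5KerVec_vecMul_md5Gram : md5KerVec c₂ c₃ c₄ ᵥ* md5Gram c₂ c₃ c₄ = 0 := by
  ext j
  fin_cases j <;> simp [md5KerVec, md5Gram, vecMul, dotProduct, Fin.sum_univ_five] <;> ring

variable {c₂ c₃ c₄}

theorem md5KerVec_ne_zero (hc : ¬(c₂ = 0 ∧ c₃ = 0 ∧ c₄ = 0)) : md5KerVec c₂ c₃ c₄ ≠ 0 := by
  intro h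
  have h₁ : 2 * c₄ ^ 2 = 0 := congrFun h 1
  have h₄ : -(c₂ ^ 2 + c₃ ^ 2) = 0 := congrFun h 4
  exact hc ⟨by nlinarith, by nlinarith, by simpa using h₁⟩

theorem exists_eq_smul_md5KerVec (hc : ¬(c₂ = 0 ∧ c₃ = 0 ∧ c₄ = 0)) {a : Fin 5 → ℝ}
    (ha : a ᵥ* md5Gram c₂ c₃ c₄ = 0) : ∃ t : ℝ, a = t • md5KerVec c₂ c₃ c₄ := by
  have E : ∀ j, ∑ i, a i * md5Gram c₂ c₃ c₄ i j = 0 := fun j => congrFun ha j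
  have E₀ := E 0
  have E₁ := E 1
  have E₂ := E 2
  have E₃ := E 3
  have E₄ := E 4
  simp only [md5Gram, of_apply, cons_val', cons_val_zero, cons_val_fin_one, cons_val_one,
    cons_val, Fin.sum_univ_five] at E₀ E₁ E₂ E₃ E₄
  -- Each `a i * w k - a k * w i` (with `w = md5KerVec c₂ c₃ c₄`) is a combination of the `Eⱼ`.
  by_cases hc₄ : c₄ = 0
  · subst hc₄
    have hw : md5KerVec c₂ c₃ 0 4 ≠ 0 := by
      simp only [md5KerVec, cons_val, neg_ne_zero]
      intro h
      exact hc ⟨by nlinarith, by nlinarith, rfl⟩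
    refine exists_eq_smul_of_mul_eq_mul hw fun i => ?_
    fin_cases i <;>
      simp only [Fin.zero_eta, Fin.mk_one, Fin.reduceFinMk, md5KerVec, cons_val_zero,
        cons_val_one, cons_val]
    · linear_combination -c₂ * E₂ - c₃ * E₃
    · linear_combination c₂ * E₃ - c₃ * E₂
    · linear_combination c₂ * E₀ + c₃ * E₁
    · linear_combination c₃ * E₀ - c₂ * E₁
  · have hw : md5KerVec c₂ c₃ c₄ 1 ≠ 0 := by
      simpa [md5KerVec] using hc₄
    refine exists_eq_smul_of_mul_eq_mul hw fun i => ?_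
    fin_cases i <;>
      simp only [Fin.zero_eta, Fin.mk_one, Fin.reduceFinMk, md5KerVec, cons_val_zero,
        cons_val_one, cons_val]
    · linear_combination c₄ * E₄
    · linear_combination 2 * c₄ * E₃ - c₃ * E₄
    · linear_combination c₂ * E₄ - 2 * c₄ * E₂
    · linear_combination -c₄ * E₀ - c₂ * E₃ + c₃ * E₂

end Gram

section MD5

variable {L : Type} [LieRing L] [LieAlgebra ℝ L]

structure IsMD5Basis (b : Basis (Fin 5) ℝ L) : Prop where
  lie_zero_one : ⁅b 0, b 1⁆ = 0
  lie_zero_two : ⁅b 0, b 2⁆ = b 2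
  lie_zero_three : ⁅b 0, b 3⁆ = b 3
  lie_zero_four : ⁅b 0, b 4⁆ = (2 : ℝ) • b 4
  lie_one_two : ⁅b 1, b 2⁆ = b 3
  lie_one_three : ⁅b 1, b 3⁆ = - b 2
  lie_one_four : ⁅b 1, b 4⁆ = 0
  lie_two_three : ⁅b 2, b 3⁆ = b 4
  lie_two_four : ⁅b 2, b 4⁆ = 0
  lie_three_four : ⁅b 3, b 4⁆ = 0

@[simp]
theorem BF_apply (F : Module.Dual ℝ L) (x y : L) : BF F x y = F ⁅x, y⁆ := rfl

namespace IsMD5Basis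

variable {b : Basis (Fin 5) ℝ L}

theorem toMatrix_BF (hb : IsMD5Basis b) (F : Module.Dual ℝ L) :
    toMatrix b (BF F) = md5Gram (F (b 2)) (F (b 3)) (F (b 4)) := by
  obtain ⟨h01, h02, h03, h04, h12, h13, h14, h23, h24, h34⟩ := hb
  ext i j
  rw [toMatrix_apply, BF_apply]
  fin_cases i <;> fin_cases j <;>
    first
    | (simp [md5Gram, h01, h02, h03, h04, h12, h13, h14, h23, h24, h34]; done)
    | (rw [← lie_skew]; simp [md5Gram, h01, h02, h03, h04, h12, h13, h14, h23, h24, h34])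

theorem BF_eq_zero (hb : IsMD5Basis b) {F : Module.Dual ℝ L}
    (hF : F (b 2) = 0 ∧ F (b 3) = 0 ∧ F (b 4) = 0) : BF F = 0 := by
  obtain ⟨h₂, h₃, h₄⟩ := hF
  apply (toMatrix b).injective
  rw [hb.toMatrix_BF, h₂, h₃, h₄, md5Gram_zero, map_zero]

theorem ker_BF (hb : IsMD5Basis b) {F : Module.Dual ℝ L}
    (hF : ¬(F (b 2) = 0 ∧ F (b 3) = 0 ∧ F (b 4) = 0)) :
    ker (BF F) = ℝ ∙ b.equivFun.symm (md5KerVec (F (b 2)) (F (b 3)) (F (b 4))) := by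
  ext x
  rw [BilinForm.mem_ker_iff_vecMul_toMatrix_eq_zero b, hb.toMatrix_BF,
    Submodule.mem_span_singleton]
  constructor
  · intro hx
    obtain ⟨t, ht⟩ := exists_eq_smul_md5KerVec hF hx
    exact ⟨t, by rw [← map_smul, ← ht]; simp⟩
  · rintro ⟨t, rfl⟩
    rw [← b.equivFun_apply, map_smul, LinearEquiv.apply_symm_apply, smul_vecMul,
      md5KerVec_vecMul_md5Gram, smul_zero]

end IsMD5Basis

end MD5

theorem md5_rank_BF_general
    (L : Type) [LieRing L] [LieAlgebra ℝ L]
    (b : Module.Basis (Fin 5) ℝ L)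
    (h01 : ⁅b 0, b 1⁆ = 0)
    (h02 : ⁅b 0, b 2⁆ = b 2)
    (h03 : ⁅b 0, b 3⁆ = b 3)
    (h04 : ⁅b 0, b 4⁆ = (2 : ℝ) • b 4)
    (h12 : ⁅b 1, b 2⁆ = b 3)
    (h13 : ⁅b 1, b 3⁆ = - b 2)
    (h14 : ⁅b 1, b 4⁆ = 0)
    (h23 : ⁅b 2, b 3⁆ = b 4)
    (h24 : ⁅b 2, b 4⁆ = 0)
    (h34 : ⁅b 3, b 4⁆ = 0)
    :
    ∀ F : Module.Dual ℝ L, rankB (BF F) = 0 ∨ rankB (BF F) = 4 := by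
  have hb : IsMD5Basis b := ⟨h01, h02, h03, h04, h12, h13, h14, h23, h24, h34⟩
  intro F
  by_cases hF : F (b 2) = 0 ∧ F (b 3) = 0 ∧ F (b 4) = 0
  · left
    rw [hb.BF_eq_zero hF, rankB_zero]
  · right
    have hv := b.equivFun.symm.map_ne_zero_iff.mpr (md5KerVec_ne_zero hF)
    rw [rankB_of_ker_eq_span_singleton hv (hb.ker_BF hF),
      finrank_eq_card_basis b, Fintype.card_fin]

theorem md5_rank_BF
    (L : Type) [LieRing L] [LieAlgebra ℝ L] [FiniteDimensional ℝ L]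
    (b : Module.Basis (Fin 5) ℝ L)
    (h01 : ⁅b 0, b 1⁆ = 0)
    (h02 : ⁅b 0, b 2⁆ = b 2)
    (h03 : ⁅b 0, b 3⁆ = b 3)
    (h04 : ⁅b 0, b 4⁆ = (2 : ℝ) • b 4)
    (h12 : ⁅b 1, b 2⁆ = b 3)
    (h13 : ⁅b 1, b 3⁆ = - b 2)
    (h14 : ⁅b 1, b 4⁆ = 0)
    (h23 : ⁅b 2, b 3⁆ = b 4)
    (h24 : ⁅b 2, b 4⁆ = 0)
    (h34 : ⁅b 3, b 4⁆ = 0)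
    :
    ∀ F : Module.Dual ℝ L, rankB (BF F) = 0 ∨ rankB (BF F) = 4 :=
  md5_rank_BF_general L b h01 h02 h03 h04 h12 h13 h14 h23 h24 h34
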